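/- Let ψ : {1,…,n} → ℂ and let P be the homogeneous operator of degree 0 associated to ψ, i.e. P(e_i) = ψ(i)·e_i for all i. Suppose P is a Reynolds operator, i.e. P(x)·P(y) = P(x·P(y) + P(x)·y − P(x)·P(y)) for all x, y ∈ A. Suppose there exists an index with ψ nonzero, let t be the least index in {1,…,n} with ψ(t) ≠ 0, and assume t ≤ ⌊n/2⌋. Then for every 1 ≤ i ≤ n: if t divides i then ψ(i)·(i − (i−t)·ψ(t)) = t·ψ(t), and if t does not divide i then ψ(i) = 0. -/
import Mathlib


open Finset

/-- Coordinate space of the `n`-dimensional complex null-filiform associative algebra,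
with respect to the basis `e_1, …, e_n` (coordinate `m : Fin n` corresponds to `e_{m+1}`). -/
abbrev NF (n : ℕ) : Type := Fin n → ℂ

/-- Multiplication of the null-filiform algebra: `e_i · e_j = e_{i+j}` if `i + j ≤ n`
and `e_i · e_j = 0` if `i + j > n`, extended bilinearly. -/
noncomputable def nfMul {n : ℕ} (x y : NF n) : NF n :=
  fun m => ∑ i : Fin n, ∑ j : Fin n,
    if (i : ℕ) + (j : ℕ) + 1 = (m : ℕ) then x i * y j else 0

/-- The basis element `e_k`, for `1 ≤ k ≤ n` (it is `0` if `k = 0` or `k > n`). -/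
noncomputable def nfE (n k : ℕ) : NF n := fun m => if (m : ℕ) + 1 = k then 1 else 0

/-- The `k`-th power (for `k ≥ 1`) of an element of the null-filiform algebra. -/
noncomputable def nfPow {n : ℕ} (x : NF n) : ℕ → NF n
  | 0 => 0
  | 1 => x
  | k + 2 => nfMul (nfPow x (k + 1)) x

lemma nfMul_smul_left {n : ℕ} (a : ℂ) (x y : NF n) :
    nfMul (a • x) y = a • nfMul x y := by
  funext m
  simp only [nfMul, Pi.smul_apply, smul_eq_mul, Finset.mul_sum]
  refine Finset.sum_congr rfl fun i _ => Finset.sum_congr rfl fun j _ => ?_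
  split <;> ring

lemma nfMul_smul_right {n : ℕ} (a : ℂ) (x y : NF n) :
    nfMul x (a • y) = a • nfMul x y := by
  funext m
  simp only [nfMul, Pi.smul_apply, smul_eq_mul, Finset.mul_sum]
  refine Finset.sum_congr rfl fun i _ => Finset.sum_congr rfl fun j _ => ?_
  split <;> ring

lemma nfMul_nfE {n i j : ℕ} (hi1 : 1 ≤ i) (hin : i ≤ n) (hj1 : 1 ≤ j) (hjn : j ≤ n) :
    nfMul (nfE n i) (nfE n j) = nfE n (i + j) := by
  funext m
  simp only [nfMul, nfE]
  rw [Finset.sum_eq_single (⟨i - 1, by omega⟩ : Fin n)]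
  · rw [Finset.sum_eq_single (⟨j - 1, by omega⟩ : Fin n)]
    · have h1 : i - 1 + 1 = i := by omega
      have h2 : j - 1 + 1 = j := by omega
      have h3 : (i - 1 + (j - 1) + 1 = (m : ℕ)) ↔ ((m : ℕ) + 1 = i + j) := by omega
      simp [h1, h2, h3]
    · intro b _ hb
      have : (b : ℕ) + 1 ≠ j := by
        intro h; apply hb; exact Fin.ext (show (b : ℕ) = j - 1 by omega)
      simp [this]
    · intro h; simp at h
  · intro a _ ha
    have : (a : ℕ) + 1 ≠ i := by
      intro h; apply ha; exact Fin.ext (show (a : ℕ) = i - 1 by omega)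
    simp [this]
  · intro h; simp at h

/-- Reynolds operator, homogeneous of degree `0`, case (a): if `t` is the least index
with `ψ(t) ≠ 0` and `t ≤ ⌊n/2⌋`, then `ψ(i)·(i − (i−t)ψ(t)) = t·ψ(t)` when `t ∣ i`,
and `ψ(i) = 0` otherwise. -/
theorem reynolds_degree0_case_a (n : ℕ) (hn : 1 ≤ n) (ψ : ℕ → ℂ)
    (P : NF n →ₗ[ℂ] NF n)
    (hP : ∀ i, 1 ≤ i → i ≤ n → P (nfE n i) = ψ i • nfE n i)
    (hRey : ∀ x y : NF n,
      nfMul (P x) (P y) =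
        P (nfMul x (P y) + nfMul (P x) y - nfMul (P x) (P y)))
    (t : ℕ) (ht1 : 1 ≤ t) (htn : t ≤ n) (hψt : ψ t ≠ 0)
    (hleast : ∀ s, 1 ≤ s → s < t → ψ s = 0)
    (ht2 : t ≤ n / 2) :
    ∀ i, 1 ≤ i → i ≤ n →
      (t ∣ i → ψ i * ((i : ℂ) - ((i : ℂ) - (t : ℂ)) * ψ t) = (t : ℂ) * ψ t) ∧
      (¬ t ∣ i → ψ i = 0) := by
  -- the fundamental relation coming from the Reynolds identity on basis elements
  have hstar : ∀ i j : ℕ, 1 ≤ i → 1 ≤ j → i + j ≤ n →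
      ψ i * ψ j = (ψ i + ψ j - ψ i * ψ j) * ψ (i + j) := by
    intro i j hi1 hj1 hij
    have h := hRey (nfE n i) (nfE n j)
    rw [hP i hi1 (by omega), hP j hj1 (by omega)] at h
    simp only [nfMul_smul_left, nfMul_smul_right] at h
    rw [nfMul_nfE hi1 (by omega) hj1 (by omega)] at h
    rw [map_sub, map_add, map_smul, map_smul, map_smul, map_smul,
      hP (i + j) (by omega) hij] at h
    have h2 := congrFun h ⟨i + j - 1, by omega⟩
    have he : (i + j - 1) + 1 = i + j := by omega
    simp only [Pi.smul_apply, Pi.add_apply, Pi.sub_apply, smul_eq_mul, nfE,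
      Fin.val_mk, he, if_pos] at h2
    linear_combination h2
  -- non-divisible indices have vanishing ψ
  have hzero : ∀ i, 1 ≤ i → i ≤ n → ¬ t ∣ i → ψ i = 0 := by
    intro i
    induction i using Nat.strong_induction_on with
    | _ i ih =>
      intro hi1 hin hnd
      rcases lt_trichotomy i t with h | h | h
      · exact hleast i hi1 h
      · exact absurd (h ▸ dvd_refl t) hnd
      · have hi' : ψ (i - t) = 0 := by
          apply ih (i - t) (by omega) (by omega) (by omega)
          intro hd
          have : t ∣ (i - t) + t := Dvd.dvd.add hd dvd_rfl
          rw [Nat.sub_add_cancel (by omega)] at this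
          exact hnd this
        have hs := hstar (i - t) t (by omega) ht1 (by omega)
        rw [Nat.sub_add_cancel (by omega)] at hs
        rw [hi'] at hs
        have hz : ψ t * ψ i = 0 := by linear_combination -hs
        rcases mul_eq_zero.mp hz with h0 | h0
        · exact absurd h0 hψt
        · exact h0
  -- multiples of t
  have hdvdk : ∀ k, 1 ≤ k → k * t ≤ n →
      ψ (k * t) * ((k : ℂ) - ((k : ℂ) - 1) * ψ t) = ψ t := by
    intro k
    induction k with
    | zero => omega
    | succ k ih =>
      intro _ hkn
      rcases Nat.eq_zero_or_pos k with hk0 | hk1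
      · subst hk0; simp
      · have hkn' : k * t ≤ n := by
          have := Nat.mul_le_mul (show k ≤ k + 1 by omega) (le_refl t)
          omega
        have hk : ψ (k * t) * ((k : ℂ) - ((k : ℂ) - 1) * ψ t) = ψ t := ih hk1 hkn'
        have hs := hstar (k * t) t (Nat.mul_pos hk1 ht1) ht1
          (by rw [Nat.succ_mul] at hkn; exact hkn)
        rw [show k * t + t = (k + 1) * t by ring] at hs
        set a := ψ (k * t) with ha
        set b := ψ ((k + 1) * t) with hb
        have hd : a + ψ t - a * ψ t ≠ 0 := by
          intro h0
          have hac : a * ψ t = 0 := by rw [hs, h0, zero_mul]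
          have ha0 : a = 0 := by
            rcases mul_eq_zero.mp hac with h1 | h1
            · exact h1
            · exact absurd h1 hψt
          rw [ha0] at h0
          simp at h0
          exact hψt h0
        have key : (a + ψ t - a * ψ t) * (b * (((k : ℂ) + 1) - (k : ℂ) * ψ t)) =
            (a + ψ t - a * ψ t) * ψ t := by
          linear_combination (-(((k : ℂ) + 1) - (k : ℂ) * ψ t)) * hs + ψ t * hk
        have := mul_left_cancel₀ hd key
        push_cast
        linear_combination this
  intro i hi1 hin
  constructor
  · intro hdvd
    obtain ⟨k, rfl⟩ := hdvd
    have hk1 : 1 ≤ k := by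
      rcases Nat.eq_zero_or_pos k with h | h
      · subst h; omega
      · exact h
    have hk := hdvdk k hk1 (by rw [mul_comm]; exact hin)
    rw [mul_comm k t] at hk
    push_cast
    linear_combination (t : ℂ) * hk
  · intro h
    exact hzero _ hi1 hin h
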